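/- arXiv:1402.2615 — 2 statements merged into one kernel-verified Lean document; each statement's English description precedes it below -/
import Mathlib

section
/- Let Ω ⊂ ℂ be an open bounded set and let k ≥ 2 be an integer. Let f : ℂ → ℂ be k times continuously differentiable (in the real sense) on the closure of Ω. Define u(z) = (1/π) ∫_Ω f(ζ) · ((z − ζ)/conj(z − ζ)) dA(ζ), where dA is the Lebesgue area measure on ℂ. Then u is k times continuously differentiable on Ω and satisfies ∂_z² u(z) = f(z) for all z ∈ Ω. -/
/-!
Near `z₀ ∈ Ω` split `f = φ f + (f - φ f)` with a bump `φ` supported in `Ω` and equal to `1`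
near `z₀`. Away from `0` the kernel `K w = w / w̄` satisfies `∂_z K = 1 / w̄` and
`∂_z (1 / w̄) = 0`, so once `K` is truncated smoothly the far part `f - φ f` contributes a smooth
function killed by `∂_z²` near `z₀`. The near part is `K ⋆ g` with `g = φ f ∈ C_c^k`, and
`∂_z² (K ⋆ g) = K ⋆ ∂_z² g`. In polar coordinates `w = r e^{iθ}` one has
`e^{iθ} ∂_z h(z - w) = -½ (∂_r - (i/r) ∂_θ) h(z - w)`, `r K(w) = r e^{2iθ}` and `r / w̄ = e^{iθ}`.
Integrating by parts in `r` and in `θ` therefore gives `∫ K ∂_z h(z - ·) = ∫ h(z - ·) / w̄`,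
and for `1 / w̄` only the boundary term at `r = 0` survives: `∫ ∂_z h(z - w) / w̄ dA(w) = π h(z)`.
-/

open MeasureTheory

/-- Wirtinger derivative `∂_z w = (1/2)(∂w/∂x - i ∂w/∂y)`, where the partial
derivatives are real directional derivatives in the directions `1` and `i`. -/
noncomputable def dz (w : ℂ → ℂ) (z : ℂ) : ℂ :=
  (1 / 2 : ℂ) * (fderiv ℝ w z 1 - Complex.I * fderiv ℝ w z Complex.I)

open Complex Set Metric Filter Function ComplexConjugate
open ContinuousLinearMap (mul)
open scoped Convolution Real Topology ContDiff

section Dz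

variable {v w : ℂ → ℂ} {z : ℂ}

theorem Filter.EventuallyEq.dz_eq (h : v =ᶠ[𝓝 z] w) : dz v z = dz w z := by
  simp only [dz, h.fderiv_eq]

theorem Filter.EventuallyEq.dz_dz_eq (h : v =ᶠ[𝓝 z] w) : dz (dz v) z = dz (dz w) z :=
  Filter.EventuallyEq.dz_eq <| h.eventuallyEq_nhds.mono fun _ => Filter.EventuallyEq.dz_eq

theorem dz_add (hv : DifferentiableAt ℝ v z) (hw : DifferentiableAt ℝ w z) :
    dz (v + w) z = dz v z + dz w z := by
  simp only [dz, fderiv_add hv hw, _root_.add_apply]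
  ring

theorem dz_const_mul (c : ℂ) (hw : DifferentiableAt ℝ w z) :
    dz (fun z => c * w z) z = c * dz w z := by
  simp only [dz, fderiv_const_mul hw c, _root_.smul_apply, smul_eq_mul]
  ring

theorem contDiff_dz {n : WithTop ℕ∞} (hw : ContDiff ℝ (n + 1) w) : ContDiff ℝ n (dz w) := by
  have hD := hw.fderiv_right le_rfl
  exact contDiff_const.mul ((hD.clm_apply contDiff_const).sub
    (contDiff_const.mul (hD.clm_apply contDiff_const)))

theorem hasCompactSupport_dz (hw : HasCompactSupport w) : HasCompactSupport (dz w) :=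
  (hw.fderiv ℝ).comp_left (g := fun A : ℂ →L[ℝ] ℂ => (1 / 2 : ℂ) * (A 1 - I * A I)) (by simp)

theorem dz_dz_add (hv : ContDiff ℝ 2 v) (hw : ContDiff ℝ 2 w) :
    dz (dz (v + w)) z = dz (dz v) z + dz (dz w) z := by
  have h : dz (v + w) = dz v + dz w :=
    funext fun z => dz_add (hv.differentiable two_ne_zero z) (hw.differentiable two_ne_zero z)
  rw [h, dz_add ((contDiff_dz (n := 1) hv).differentiable one_ne_zero z)
    ((contDiff_dz (n := 1) hw).differentiable one_ne_zero z)]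

theorem dz_dz_const_mul (c : ℂ) (hw : ContDiff ℝ 2 w) :
    dz (dz fun z => c * w z) z = c * dz (dz w) z := by
  have h : dz (fun z => c * w z) = fun z => c * dz w z :=
    funext fun z => dz_const_mul c (hw.differentiable two_ne_zero z)
  rw [h, dz_const_mul c ((contDiff_dz (n := 1) hw).differentiable one_ne_zero z)]

theorem ContinuousLinearMap.apply_sub_I_mul_apply_I_mul (A : ℂ →L[ℝ] ℂ) (c : ℂ) :
    A c - I * A (I * c) = c * (A 1 - I * A I) := by
  obtain ⟨a, b, rfl⟩ : ∃ a b : ℝ, c = a + b * I := ⟨c.re, c.im, (re_add_im c).symm⟩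
  have hIc : I * (a + b * I) = (-b) • (1 : ℂ) + a • I := by
    simp only [Complex.real_smul, ofReal_neg]
    linear_combination (b : ℂ) * I_sq
  have hc : (a + b * I : ℂ) = a • (1 : ℂ) + b • I := by simp [Complex.real_smul]
  rw [hIc, hc]
  simp only [map_add, ContinuousLinearMap.map_smul]
  simp only [Complex.real_smul, ofReal_neg]
  linear_combination (b : ℂ) * A I * I_sq

theorem mul_dz (w : ℂ → ℂ) (z c : ℂ) :
    c * dz w z = (1 / 2) * (fderiv ℝ w z c - I * fderiv ℝ w z (I * c)) := by
  rw [dz, (fderiv ℝ w z).apply_sub_I_mul_apply_I_mul]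
  ring

theorem dz_eq_of_hasFDerivAt {A : ℂ →L[ℝ] ℂ} {a b : ℂ} (hw : HasFDerivAt w A z)
    (hA : ∀ v, A v = a * v + b * conj v) : dz w z = a := by
  simp only [dz, hw.fderiv, hA, map_one, conj_I]
  linear_combination (-(1 / 2) * a + (1 / 2) * b) * I_sq

end Dz

section Convolution

variable {p q : ℂ → ℂ}

theorem convolution_apply_congr_right {G E E' F : Type*} [NormedAddCommGroup E]
    [NormedAddCommGroup E'] [NormedAddCommGroup F] [NormedSpace ℝ E] [NormedSpace ℝ E']
    [NormedSpace ℝ F] [MeasurableSpace G] [Sub G] {μ : Measure G} {L : E →L[ℝ] E' →L[ℝ] F}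
    {f : G → E} {g g' : G → E'} {x : G} (h : ∀ t, f t ≠ 0 → g (x - t) = g' (x - t)) :
    (f ⋆[L, μ] g) x = (f ⋆[L, μ] g') x := by
  simp only [convolution_def]
  congr 1
  funext t
  by_cases ht : f t = 0
  · simp [ht]
  · rw [h t ht]

theorem dz_convolution (hp : LocallyIntegrable p) (hq : ContDiff ℝ 1 q)
    (hcq : HasCompactSupport q) (z : ℂ) :
    dz (p ⋆[mul ℝ ℂ] q) z = (p ⋆[mul ℝ ℂ] dz q) z := by
  have hDq := hq.continuous_fderiv one_ne_zero
  have hD : ∀ v, fderiv ℝ (p ⋆[mul ℝ ℂ] q) z v = ∫ t, p t * fderiv ℝ q (z - t) v := fun v => by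
    rw [(hcq.hasFDerivAt_convolution_right _ hp hq z).fderiv,
      convolution_precompR_apply _ hp (hcq.fderiv ℝ) hDq]
    rfl
  have hint : ∀ v, Integrable fun t => p t * fderiv ℝ q (z - t) v := fun v =>
    ((hcq.fderiv ℝ).comp_left (g := fun A : ℂ →L[ℝ] ℂ => A v) rfl).convolutionExists_right
      (mul ℝ ℂ) hp (hDq.clm_apply continuous_const) z
  rw [dz, hD, hD, convolution_def, ← integral_const_mul I,
    ← integral_sub (hint 1) ((hint I).const_mul I), ← integral_const_mul]
  congr 1
  funext t
  simp only [dz, ContinuousLinearMap.mul_apply']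
  ring

theorem dz_dz_convolution (hp : LocallyIntegrable p) (hq : ContDiff ℝ 2 q)
    (hcq : HasCompactSupport q) (z : ℂ) :
    dz (dz (p ⋆[mul ℝ ℂ] q)) z = (p ⋆[mul ℝ ℂ] dz (dz q)) z := by
  rw [funext (dz_convolution hp (hq.of_le one_le_two) hcq),
    dz_convolution hp (contDiff_dz (n := 1) hq) (hasCompactSupport_dz hcq)]

end Convolution

theorem ContDiffOn.contDiff_smul_of_tsupport_subset {E F : Type*} [NormedAddCommGroup E]
    [NormedSpace ℝ E] [NormedAddCommGroup F] [NormedSpace ℝ F] {n : WithTop ℕ∞}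
    {φ : E → ℝ} {f : E → F} {s : Set E} (hf : ContDiffOn ℝ n f s) (hs : IsOpen s)
    (hφ : ContDiff ℝ n φ) (hφs : tsupport φ ⊆ s) : ContDiff ℝ n fun x => φ x • f x := by
  refine contDiff_of_contDiffOn_union_of_isOpen (hφ.contDiffOn.smul hf)
    (contDiffOn_const (c := 0).congr fun x hx => ?_) ?_ hs (isClosed_tsupport φ).isOpen_compl
  · simp [image_eq_zero_of_notMem_tsupport hx]
  · exact eq_univ_of_forall fun x => (em (x ∈ tsupport φ)).imp (@hφs x) id

theorem MeasureTheory.setIntegral_prod_symm {α β E : Type*} [MeasurableSpace α]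
    [MeasurableSpace β] [NormedAddCommGroup E] [NormedSpace ℝ E] {μ : Measure α} {ν : Measure β}
    [SFinite μ] [SFinite ν] (f : α × β → E) {s : Set α} {t : Set β}
    (hf : IntegrableOn f (s ×ˢ t) (μ.prod ν)) :
    ∫ p in s ×ˢ t, f p ∂μ.prod ν = ∫ y in t, ∫ x in s, f (x, y) ∂μ ∂ν := by
  simp only [← Measure.prod_restrict s t, IntegrableOn] at hf ⊢
  exact integral_prod_symm f hf

theorem MeasureTheory.integrableOn_Ioi_of_eventually_eq_zero {E : Type*} [NormedAddCommGroup E]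
    {g : ℝ → E} (hg : Continuous g) (h : ∀ᶠ r in atTop, g r = 0) (a : ℝ) :
    IntegrableOn g (Ioi a) := by
  obtain ⟨R, hR⟩ := eventually_atTop.1 h
  exact (hg.continuousOn.integrableOn_compact isCompact_Icc).of_forall_sdiff_eq_zero
    measurableSet_Ioi fun r hr => hR r (not_le.1 fun h => hr.2 ⟨hr.1.le, h⟩).le

theorem setIntegral_Ioo_eq_zero_of_hasDerivAt {E : Type*} [NormedAddCommGroup E]
    [NormedSpace ℝ E] [CompleteSpace E] {F F' : ℝ → E} {a b : ℝ} (hab : a ≤ b)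
    (hF : ∀ x, HasDerivAt F (F' x) x) (hF' : Continuous F') (h : F a = F b) :
    ∫ x in Ioo a b, F' x = 0 := by
  rw [← integral_Ioc_eq_integral_Ioo, ← intervalIntegral.integral_of_le hab,
    intervalIntegral.integral_eq_sub_of_hasDerivAt (fun x _ => hF x)
      (hF'.intervalIntegrable a b), h, sub_self]

namespace Wirtinger

noncomputable def divConj (w : ℂ) : ℂ := w / conj w

noncomputable def invConj (w : ℂ) : ℂ := (conj w)⁻¹

theorem norm_divConj_le (w : ℂ) : ‖divConj w‖ ≤ 1 := by
  rw [divConj, norm_div, RCLike.norm_conj]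
  exact div_self_le_one _

theorem measurable_divConj : Measurable divConj :=
  measurable_id.div continuous_conj.measurable

theorem locallyIntegrable_divConj : LocallyIntegrable divConj :=
  locallyIntegrable_iff.2 fun _ hK => Measure.integrableOn_of_bounded hK.measure_lt_top.ne
    measurable_divConj.aestronglyMeasurable (ae_of_all _ norm_divConj_le)

theorem _root_.MeasureTheory.Integrable.convolutionExistsAt_divConj {p : ℂ → ℂ}
    (hp : Integrable p) (z : ℂ) : ConvolutionExistsAt p divConj z (mul ℝ ℂ) := by
  have h := hp.bdd_mul (c := 1) (measurable_divConj.comp (measurable_const.sub measurable_id)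
    |>.aestronglyMeasurable) (ae_of_all _ fun t => norm_divConj_le (z - t))
  exact h.congr (ae_of_all _ fun t => mul_comm _ _)

theorem contDiffOn_divConj : ContDiffOn ℝ ∞ divConj {0}ᶜ := by
  have hconj : ContDiff ℝ ∞ fun w : ℂ => conj w := conjCLE.contDiff
  intro w hw
  have hw' : conj w ≠ 0 := by simpa using hw
  exact (contDiffAt_id.mul (((contDiffAt_inv ℂ hw').restrict_scalars ℝ).comp w
    hconj.contDiffAt)).contDiffWithinAt.congr (fun _ _ => div_eq_mul_inv _ _) (div_eq_mul_inv _ _)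

theorem hasFDerivAt_invConj {w : ℂ} (hw : w ≠ 0) :
    HasFDerivAt invConj
      ((((1 : ℂ →L[ℂ] ℂ).smulRight (-(conj w ^ 2)⁻¹)).restrictScalars ℝ).comp
        conjCLE.toContinuousLinearMap) w :=
  ((hasDerivAt_inv (by simpa using hw)).hasFDerivAt.restrictScalars ℝ).comp w
    conjCLE.hasFDerivAt

theorem dz_invConj {w : ℂ} (hw : w ≠ 0) : dz invConj w = 0 :=
  dz_eq_of_hasFDerivAt (b := -(conj w ^ 2)⁻¹) (hasFDerivAt_invConj hw) fun v => by simp [mul_comm]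

theorem dz_divConj {w : ℂ} (hw : w ≠ 0) : dz divConj w = invConj w := by
  have h : divConj = fun w => w * invConj w := funext fun w => div_eq_mul_inv _ _
  rw [h]
  exact dz_eq_of_hasFDerivAt (b := w * -(conj w ^ 2)⁻¹)
    ((hasFDerivAt_id w).mul' (hasFDerivAt_invConj hw)) fun v => by simp; ring

theorem dz_dz_eq_zero_of_eqOn_divConj {K : ℂ → ℂ} {U : Set ℂ} (hU : IsOpen U) (h0 : (0 : ℂ) ∉ U)
    (hK : EqOn K divConj U) {w : ℂ} (hw : w ∈ U) : dz (dz K) w = 0 := by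
  have hne : ∀ y ∈ U, y ≠ 0 := fun y hy h => h0 (h ▸ hy)
  have h : dz K =ᶠ[𝓝 w] invConj := by
    filter_upwards [hU.mem_nhds hw] with y hy
    rw [(Filter.eventuallyEq_of_mem (hU.mem_nhds hy) hK).dz_eq, dz_divConj (hne y hy)]
  rw [h.dz_eq, dz_invConj (hne w hw)]

theorem exists_contDiff_hasCompactSupport_eqOn_divConj {a : ℝ} (ha : 0 < a) (b : ℝ) :
    ∃ K : ℂ → ℂ, ContDiff ℝ ∞ K ∧ HasCompactSupport K ∧
      EqOn K divConj {w | a < ‖w‖ ∧ ‖w‖ < b} := by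
  let ψ : ContDiffBump (0 : ℂ) := ⟨a / 2, a, by positivity, by linarith⟩
  let χ : ContDiffBump (0 : ℂ) := ⟨max a b, max a b + 1, lt_max_of_lt_left ha, by linarith⟩
  have hψ : tsupport (fun w => 1 - ψ w) ⊆ {0}ᶜ := by
    refine (closure_minimal (fun w hw => ?_) isOpen_ball.isClosed_compl).trans
      (compl_subset_compl.2 (singleton_subset_iff.2 (mem_ball_self (by positivity : 0 < a / 2))))
    exact fun hw' => hw (by simp [ψ.one_of_mem_closedBall (ball_subset_closedBall hw')])
  refine ⟨fun w => χ w • ((1 - ψ w) • divConj w), χ.contDiff.smul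
    (contDiffOn_divConj.contDiff_smul_of_tsupport_subset isOpen_compl_singleton
      (contDiff_const.sub ψ.contDiff) hψ), χ.hasCompactSupport.smul_right, fun w hw => ?_⟩
  have hψw : ψ w = 0 := ψ.zero_of_le_dist (by simpa using hw.1.le)
  have hχw : χ w = 1 := χ.one_of_mem_closedBall
    (mem_closedBall_zero_iff.2 (hw.2.le.trans (le_max_right a b)))
  simp [hψw, hχw]

noncomputable def cis (θ : ℝ) : ℂ := exp (θ * I)

theorem norm_cis (θ : ℝ) : ‖cis θ‖ = 1 := norm_exp_ofReal_mul_I θ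

@[fun_prop]
theorem continuous_cis : Continuous cis := by unfold cis; fun_prop

theorem hasDerivAt_cis (θ : ℝ) : HasDerivAt cis (I * cis θ) θ := by
  have h := ((hasDerivAt_id (θ : ℂ)).mul_const I).cexp.comp_ofReal
  rw [id, one_mul, mul_comm] at h
  exact h

theorem conj_cis (θ : ℝ) : conj (cis θ) = (cis θ)⁻¹ := by
  rw [cis, ← exp_conj, ← exp_neg]
  simp

theorem cis_neg_pi : cis (-π) = cis π := by
  simp [cis, exp_neg, exp_pi_mul_I]

theorem polarCoord_symm_eq (p : ℝ × ℝ) : Complex.polarCoord.symm p = p.1 * cis p.2 := by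
  rw [Complex.polarCoord_symm_apply, cis, exp_mul_I, ← ofReal_cos, ← ofReal_sin]

theorem divConj_ofReal_mul_cis {r : ℝ} (hr : r ≠ 0) (θ : ℝ) :
    divConj (r * cis θ) = cis θ ^ 2 := by
  have hc : cis θ ≠ 0 := exp_ne_zero _
  have hr' : (r : ℂ) ≠ 0 := ofReal_ne_zero.2 hr
  rw [divConj, map_mul, conj_ofReal, conj_cis]
  field_simp

theorem invConj_ofReal_mul_cis (r θ : ℝ) : invConj (r * cis θ) = (r : ℂ)⁻¹ * cis θ := by
  rw [invConj, map_mul, conj_ofReal, conj_cis, mul_inv, inv_inv]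

theorem integral_eq_setIntegral_polar (G : ℂ → ℂ) :
    ∫ w, G w = ∫ p in Ioi (0 : ℝ) ×ˢ Ioo (-π) π, p.1 • G (p.1 * cis p.2) := by
  simp_rw [← polarCoord_symm_eq, ← Complex.integral_comp_polarCoord_symm]
  rfl

theorem integrableOn_polar {G : ℝ × ℝ → ℂ} (hG : Continuous G)
    (h : ∀ᶠ r in atTop, ∀ θ, G (r, θ) = 0) : IntegrableOn G (Ioi 0 ×ˢ Ioo (-π) π) := by
  obtain ⟨R, hR⟩ := eventually_atTop.1 h
  refine (hG.continuousOn.integrableOn_compact ((isCompact_Icc (a := 0) (b := R)).prod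
    (isCompact_Icc (a := -π) (b := π)))).of_forall_sdiff_eq_zero
    (measurableSet_Ioi.prod measurableSet_Ioo) ?_
  rintro ⟨r, θ⟩ ⟨⟨hr, hθ⟩, hp⟩
  exact hR r (not_le.1 fun h => hp ⟨⟨hr.le, h⟩, hθ.1.le, hθ.2.le⟩).le θ

section PolarCoordinates

variable (q : ℂ → ℂ) (z : ℂ)

noncomputable def polarComp (r θ : ℝ) : ℂ := q (z - r * cis θ)

noncomputable def radialDeriv (r θ : ℝ) : ℂ := fderiv ℝ q (z - r * cis θ) (cis θ)

noncomputable def angularDeriv (r θ : ℝ) : ℂ := fderiv ℝ q (z - r * cis θ) (I * cis θ)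

variable {q}

theorem cis_mul_dz_polar (r θ : ℝ) :
    cis θ * dz q (z - r * cis θ) = (1 / 2) * (radialDeriv q z r θ - I * angularDeriv q z r θ) :=
  mul_dz q _ _

theorem continuous_polarPoint : Continuous fun p : ℝ × ℝ => z - p.1 * cis p.2 := by
  fun_prop

theorem continuous_polarComp (hq : Continuous q) : Continuous (uncurry (polarComp q z)) :=
  hq.comp (continuous_polarPoint z)

theorem continuous_radialDeriv (hq : ContDiff ℝ 1 q) : Continuous (uncurry (radialDeriv q z)) :=
  ((hq.continuous_fderiv one_ne_zero).comp (continuous_polarPoint z)).clm_apply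
    (continuous_cis.comp continuous_snd)

theorem continuous_angularDeriv (hq : ContDiff ℝ 1 q) :
    Continuous (uncurry (angularDeriv q z)) :=
  ((hq.continuous_fderiv one_ne_zero).comp (continuous_polarPoint z)).clm_apply
    (continuous_const.mul (continuous_cis.comp continuous_snd))

theorem hasDerivAt_polarComp_radial (hq : ContDiff ℝ 1 q) (r θ : ℝ) :
    HasDerivAt (polarComp q z · θ) (-radialDeriv q z r θ) r := by
  have h : HasDerivAt (fun r : ℝ => z - r * cis θ) (-cis θ) r := by
    simpa using ((hasDerivAt_id (r : ℂ)).comp_ofReal.mul_const (cis θ)).const_sub z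
  have h' := (hq.differentiable one_ne_zero _).hasFDerivAt.comp_hasDerivAt r h
  rw [map_neg] at h'
  exact h'

theorem hasDerivAt_polarComp_angular (hq : ContDiff ℝ 1 q) (r θ : ℝ) :
    HasDerivAt (polarComp q z r) (-(r * angularDeriv q z r θ)) θ := by
  have h : HasDerivAt (fun θ : ℝ => z - r * cis θ) ((-r : ℝ) • (I * cis θ)) θ := by
    simpa [Complex.real_smul] using ((hasDerivAt_cis θ).const_mul (r : ℂ)).const_sub z
  have h' := (hq.differentiable one_ne_zero _).hasFDerivAt.comp_hasDerivAt θ h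
  rw [ContinuousLinearMap.map_smul, Complex.real_smul, ofReal_neg, neg_mul] at h'
  exact h'

theorem eventually_polarPoint_notMem_tsupport (hcq : HasCompactSupport q) :
    ∀ᶠ r : ℝ in atTop, ∀ θ, z - r * cis θ ∉ tsupport q := by
  obtain ⟨R, hR⟩ := hcq.isBounded.subset_closedBall z
  filter_upwards [eventually_gt_atTop R, eventually_ge_atTop 0] with r hr hr0 θ hmem
  have := mem_closedBall.1 (hR hmem)
  rw [dist_eq_norm, sub_sub_cancel_left, norm_neg, norm_mul, norm_cis, mul_one, norm_real,
    Real.norm_of_nonneg hr0] at this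
  linarith


theorem eventually_polarComp_eq_zero (hcq : HasCompactSupport q) :
    ∀ᶠ r in atTop, ∀ θ, polarComp q z r θ = 0 :=
  (eventually_polarPoint_notMem_tsupport z hcq).mono fun _ h θ =>
    image_eq_zero_of_notMem_tsupport (f := q) (h θ)

theorem eventually_radialDeriv_eq_zero (hcq : HasCompactSupport q) :
    ∀ᶠ r in atTop, ∀ θ, radialDeriv q z r θ = 0 :=
  (eventually_polarPoint_notMem_tsupport z hcq).mono fun _ h θ => by
    simp [radialDeriv, fderiv_of_notMem_tsupport ℝ (h θ)]

theorem eventually_angularDeriv_eq_zero (hcq : HasCompactSupport q) :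
    ∀ᶠ r in atTop, ∀ θ, angularDeriv q z r θ = 0 :=
  (eventually_polarPoint_notMem_tsupport z hcq).mono fun _ h θ => by
    simp [angularDeriv, fderiv_of_notMem_tsupport ℝ (h θ)]

theorem integral_radialDeriv (hq : ContDiff ℝ 1 q) (hcq : HasCompactSupport q) (θ : ℝ) :
    ∫ r in Ioi 0, radialDeriv q z r θ = q z := by
  have h := integral_Ioi_of_hasDerivAt_of_tendsto' (m := 0)
    (fun r _ => hasDerivAt_polarComp_radial z hq r θ)
    (integrableOn_Ioi_of_eventually_eq_zero ((continuous_radialDeriv z hq).uncurry_right θ).neg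
      ((eventually_radialDeriv_eq_zero z hcq).mono fun r h => by simp [h θ]) 0)
    (tendsto_const_nhds.congr' ((eventually_polarComp_eq_zero z hcq).mono fun r h => (h θ).symm))
  rw [integral_neg, zero_sub, neg_inj] at h
  simpa [polarComp] using h

theorem integral_ofReal_mul_radialDeriv (hq : ContDiff ℝ 1 q) (hcq : HasCompactSupport q)
    (θ : ℝ) :
    ∫ r in Ioi (0 : ℝ), (r : ℂ) * radialDeriv q z r θ = ∫ r in Ioi 0, polarComp q z r θ := by
  have hP : IntegrableOn (polarComp q z · θ) (Ioi 0) :=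
    integrableOn_Ioi_of_eventually_eq_zero ((continuous_polarComp z hq.continuous).uncurry_right θ)
      ((eventually_polarComp_eq_zero z hcq).mono fun r h => h θ) 0
  have hR : IntegrableOn (fun r : ℝ => (r : ℂ) * radialDeriv q z r θ) (Ioi 0) :=
    integrableOn_Ioi_of_eventually_eq_zero
      (continuous_ofReal.mul ((continuous_radialDeriv z hq).uncurry_right θ))
      ((eventually_radialDeriv_eq_zero z hcq).mono fun r h => by simp [h θ]) 0
  have hd : ∀ r : ℝ, HasDerivAt (fun r : ℝ => (r : ℂ) * polarComp q z r θ)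
      (polarComp q z r θ - r * radialDeriv q z r θ) r := fun r => by
    simpa [sub_eq_add_neg] using
      (hasDerivAt_id (r : ℂ)).comp_ofReal.fun_mul (hasDerivAt_polarComp_radial z hq r θ)
  have h := integral_Ioi_of_hasDerivAt_of_tendsto' (m := 0) (fun r _ => hd r) (hP.sub hR)
    (tendsto_const_nhds.congr' ((eventually_polarComp_eq_zero z hcq).mono fun r h => by
      simp [h θ]))
  rw [integral_sub hP hR, ofReal_zero, zero_mul, sub_zero, sub_eq_zero] at h
  exact h.symm

theorem integral_angularDeriv (hq : ContDiff ℝ 1 q) {r : ℝ} (hr : r ≠ 0) :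
    ∫ θ in Ioo (-π) π, angularDeriv q z r θ = 0 := by
  have h := setIntegral_Ioo_eq_zero_of_hasDerivAt (a := -π) (b := π) (by linarith [Real.pi_pos])
    (hasDerivAt_polarComp_angular z hq r)
    (continuous_const.mul ((continuous_angularDeriv z hq).uncurry_left r)).neg
    (by simp only [polarComp, cis_neg_pi])
  rw [integral_neg, neg_eq_zero, integral_const_mul, mul_eq_zero] at h
  exact h.resolve_left (ofReal_ne_zero.2 hr)

theorem integral_cis_mul_angularDeriv (hq : ContDiff ℝ 1 q) (r : ℝ) :
    ∫ θ in Ioo (-π) π, cis θ * (r * angularDeriv q z r θ)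
      = I * ∫ θ in Ioo (-π) π, cis θ * polarComp q z r θ := by
  have hP := (continuous_polarComp z hq.continuous).uncurry_left r
  have hA := (continuous_angularDeriv z hq).uncurry_left r
  have hint : ∀ {G : ℝ → ℂ}, Continuous G → IntegrableOn G (Ioo (-π) π) :=
    fun hG => hG.integrableOn_Icc.mono_set Ioo_subset_Icc_self
  have h := setIntegral_Ioo_eq_zero_of_hasDerivAt (a := -π) (b := π) (by linarith [Real.pi_pos])
    (fun θ => (hasDerivAt_cis θ).fun_mul (hasDerivAt_polarComp_angular z hq r θ))
    (by fun_prop) (by simp only [polarComp, cis_neg_pi])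
  rw [integral_add (hint (by fun_prop)) (hint (by fun_prop))] at h
  simp only [mul_neg, integral_neg, mul_assoc, integral_const_mul] at h
  linear_combination -h

end PolarCoordinates

variable {q : ℂ → ℂ}

theorem integral_invConj_mul_dz (hq : ContDiff ℝ 1 q) (hcq : HasCompactSupport q) (z : ℂ) :
    ∫ w, invConj w * dz q (z - w) = π * q z := by
  have hR : IntegrableOn (uncurry (radialDeriv q z)) (Ioi 0 ×ˢ Ioo (-π) π) :=
    integrableOn_polar (continuous_radialDeriv z hq) (eventually_radialDeriv_eq_zero z hcq)
  have hA : IntegrableOn (uncurry (angularDeriv q z)) (Ioi 0 ×ˢ Ioo (-π) π) :=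
    integrableOn_polar (continuous_angularDeriv z hq) (eventually_angularDeriv_eq_zero z hcq)
  have hR' : ∫ p in Ioi 0 ×ˢ Ioo (-π) π, uncurry (radialDeriv q z) p = 2 * π * q z := by
    rw [Measure.volume_eq_prod, setIntegral_prod_symm _ hR]
    simp only [uncurry_apply_pair, integral_radialDeriv z hq hcq, setIntegral_const,
      Real.volume_real_Ioo, real_smul]
    rw [max_eq_left (by linarith [Real.pi_pos])]
    push_cast
    ring
  have hA' : ∫ p in Ioi 0 ×ˢ Ioo (-π) π, uncurry (angularDeriv q z) p = 0 := by
    rw [Measure.volume_eq_prod, setIntegral_prod _ hA]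
    simp only [uncurry_apply_pair]
    rw [setIntegral_congr_fun measurableSet_Ioi fun r hr => integral_angularDeriv z hq hr.ne',
      integral_zero]
  calc ∫ w, invConj w * dz q (z - w)
      = ∫ p in Ioi 0 ×ˢ Ioo (-π) π,
          (1 / 2 : ℂ) * (uncurry (radialDeriv q z) p - I * uncurry (angularDeriv q z) p) := by
        rw [integral_eq_setIntegral_polar]
        refine setIntegral_congr_fun (measurableSet_Ioi.prod measurableSet_Ioo) fun p hp => ?_
        have hr : (p.1 : ℂ) ≠ 0 := ofReal_ne_zero.2 hp.1.ne'
        rw [invConj_ofReal_mul_cis, real_smul, ← mul_assoc, ← mul_assoc, mul_inv_cancel₀ hr,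
          one_mul, cis_mul_dz_polar]
        rfl
    _ = π * q z := by
        rw [integral_const_mul, integral_sub hR (hA.const_mul I), integral_const_mul, hR', hA']
        ring

theorem integrableOn_cis_mul_polarComp (hq : Continuous q) (hcq : HasCompactSupport q) (z : ℂ) :
    IntegrableOn (fun p : ℝ × ℝ => cis p.2 * polarComp q z p.1 p.2) (Ioi 0 ×ˢ Ioo (-π) π) :=
  integrableOn_polar ((continuous_cis.comp continuous_snd).mul (continuous_polarComp z hq))
    ((eventually_polarComp_eq_zero z hcq).mono fun r h θ => by simp [h θ])

theorem integrableOn_cis_mul_ofReal_mul_radialDeriv (hq : ContDiff ℝ 1 q)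
    (hcq : HasCompactSupport q) (z : ℂ) :
    IntegrableOn (fun p : ℝ × ℝ => cis p.2 * (p.1 * radialDeriv q z p.1 p.2))
      (Ioi 0 ×ˢ Ioo (-π) π) :=
  integrableOn_polar ((continuous_cis.comp continuous_snd).mul
      ((continuous_ofReal.comp continuous_fst).mul (continuous_radialDeriv z hq)))
    ((eventually_radialDeriv_eq_zero z hcq).mono fun r h θ => by simp [h θ])

theorem integrableOn_cis_mul_ofReal_mul_angularDeriv (hq : ContDiff ℝ 1 q)
    (hcq : HasCompactSupport q) (z : ℂ) :
    IntegrableOn (fun p : ℝ × ℝ => cis p.2 * (p.1 * angularDeriv q z p.1 p.2))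
      (Ioi 0 ×ˢ Ioo (-π) π) :=
  integrableOn_polar ((continuous_cis.comp continuous_snd).mul
      ((continuous_ofReal.comp continuous_fst).mul (continuous_angularDeriv z hq)))
    ((eventually_angularDeriv_eq_zero z hcq).mono fun r h θ => by simp [h θ])

theorem setIntegral_cis_mul_ofReal_mul_radialDeriv (hq : ContDiff ℝ 1 q)
    (hcq : HasCompactSupport q) (z : ℂ) :
    ∫ p in Ioi 0 ×ˢ Ioo (-π) π, cis p.2 * (p.1 * radialDeriv q z p.1 p.2)
      = ∫ p in Ioi 0 ×ˢ Ioo (-π) π, cis p.2 * polarComp q z p.1 p.2 := by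
  rw [Measure.volume_eq_prod,
    setIntegral_prod_symm _ (integrableOn_cis_mul_ofReal_mul_radialDeriv hq hcq z),
    setIntegral_prod_symm _ (integrableOn_cis_mul_polarComp hq.continuous hcq z)]
  simp only [integral_const_mul, integral_ofReal_mul_radialDeriv z hq hcq]

theorem setIntegral_cis_mul_ofReal_mul_angularDeriv (hq : ContDiff ℝ 1 q)
    (hcq : HasCompactSupport q) (z : ℂ) :
    ∫ p in Ioi 0 ×ˢ Ioo (-π) π, cis p.2 * (p.1 * angularDeriv q z p.1 p.2)
      = I * ∫ p in Ioi 0 ×ˢ Ioo (-π) π, cis p.2 * polarComp q z p.1 p.2 := by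
  rw [Measure.volume_eq_prod,
    setIntegral_prod _ (integrableOn_cis_mul_ofReal_mul_angularDeriv hq hcq z),
    setIntegral_prod _ (integrableOn_cis_mul_polarComp hq.continuous hcq z), ← integral_const_mul]
  simp only [integral_cis_mul_angularDeriv z hq]

theorem integral_divConj_mul_dz (hq : ContDiff ℝ 1 q) (hcq : HasCompactSupport q) (z : ℂ) :
    ∫ w, divConj w * dz q (z - w) = ∫ w, invConj w * q (z - w) := by
  calc ∫ w, divConj w * dz q (z - w)
      = ∫ p in Ioi 0 ×ˢ Ioo (-π) π, (1 / 2 : ℂ) * (cis p.2 * (p.1 * radialDeriv q z p.1 p.2)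
          - I * (cis p.2 * (p.1 * angularDeriv q z p.1 p.2))) := by
        rw [integral_eq_setIntegral_polar]
        refine setIntegral_congr_fun (measurableSet_Ioi.prod measurableSet_Ioo) fun p hp => ?_
        rw [divConj_ofReal_mul_cis hp.1.ne', real_smul]
        linear_combination (p.1 * cis p.2 : ℂ) * cis_mul_dz_polar z p.1 p.2
    _ = ∫ p in Ioi 0 ×ˢ Ioo (-π) π, cis p.2 * polarComp q z p.1 p.2 := by
        rw [integral_const_mul, integral_sub (integrableOn_cis_mul_ofReal_mul_radialDeriv hq hcq z)
          ((integrableOn_cis_mul_ofReal_mul_angularDeriv hq hcq z).const_mul I),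
          integral_const_mul, setIntegral_cis_mul_ofReal_mul_radialDeriv hq hcq,
          setIntegral_cis_mul_ofReal_mul_angularDeriv hq hcq]
        linear_combination (-(1 / 2) * ∫ p in Ioi 0 ×ˢ Ioo (-π) π,
          cis p.2 * polarComp q z p.1 p.2) * I_sq
    _ = ∫ w, invConj w * q (z - w) := by
        rw [integral_eq_setIntegral_polar]
        refine setIntegral_congr_fun (measurableSet_Ioi.prod measurableSet_Ioo) fun p hp => ?_
        have hr : (p.1 : ℂ) ≠ 0 := ofReal_ne_zero.2 hp.1.ne'
        rw [invConj_ofReal_mul_cis, real_smul, polarComp]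
        field_simp

theorem dz_dz_divConj_convolution {q : ℂ → ℂ} (hq : ContDiff ℝ 2 q) (hcq : HasCompactSupport q)
    (z : ℂ) : dz (dz (divConj ⋆[mul ℝ ℂ] q)) z = π * q z := by
  rw [dz_dz_convolution locallyIntegrable_divConj hq hcq, convolution_def]
  simp only [ContinuousLinearMap.mul_apply']
  rw [integral_divConj_mul_dz (contDiff_dz (n := 1) hq) (hasCompactSupport_dz hcq),
    integral_invConj_mul_dz (hq.of_le one_le_two) hcq]

theorem exists_eqOn_convolution_divConj_of_far {p : ℂ → ℂ} (hp : Integrable p) {z₀ : ℂ}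
    {a ρ : ℝ} (ha : 0 < a) (hfar : ∀ t, p t ≠ 0 → 2 * a < dist t z₀ ∧ ‖t‖ < ρ) :
    ∃ w : ℂ → ℂ, ContDiff ℝ ∞ w ∧ EqOn (p ⋆[mul ℝ ℂ] divConj) w (ball z₀ a) ∧
      dz (dz w) z₀ = 0 := by
  obtain ⟨K, hK, hcK, hKA⟩ := exists_contDiff_hasCompactSupport_eqOn_divConj ha (‖z₀‖ + a + ρ)
  set A := {w : ℂ | a < ‖w‖ ∧ ‖w‖ < ‖z₀‖ + a + ρ}
  have hA : ∀ z ∈ ball z₀ a, ∀ t, p t ≠ 0 → z - t ∈ A := by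
    intro z hz t ht
    have hz' := mem_ball.1 hz
    obtain ⟨ht₀, htρ⟩ := hfar t ht
    show a < ‖z - t‖ ∧ ‖z - t‖ < ‖z₀‖ + a + ρ
    rw [← dist_eq_norm]
    refine ⟨by linarith [dist_triangle t z z₀, dist_comm z t], ?_⟩
    linarith [dist_triangle z z₀ t, dist_triangle z₀ 0 t, dist_zero_right z₀, dist_zero_left t]
  refine ⟨p ⋆[mul ℝ ℂ] K, hcK.contDiff_convolution_right _ hp.locallyIntegrable hK,
    fun z hz => convolution_apply_congr_right fun t ht => (hKA (hA z hz t ht)).symm, ?_⟩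
  have hA_open : IsOpen A :=
    (isOpen_lt continuous_const continuous_norm).inter (isOpen_lt continuous_norm continuous_const)
  have hA0 : (0 : ℂ) ∉ A := fun h => by simpa using h.1.trans' ha
  rw [dz_dz_convolution hp.locallyIntegrable (hK.of_le (WithTop.coe_le_coe.2 le_top)) hcK,
    convolution_apply_congr_right (g' := 0) fun t ht =>
      dz_dz_eq_zero_of_eqOn_divConj hA_open hA0 hKA (hA z₀ (mem_ball_self ha) t ht),
    convolution_zero, Pi.zero_apply]

theorem exists_local_model_convolution_divConj {Ω : Set ℂ} (hΩ : IsOpen Ω)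
    (hΩb : Bornology.IsBounded Ω) {f : ℂ → ℂ} {n : ℕ∞} (hn : 2 ≤ n) (hf : ContDiffOn ℝ n f Ω)
    (hF : Integrable (Ω.indicator f)) {z₀ : ℂ} (hz₀ : z₀ ∈ Ω) :
    ∃ w : ℂ → ℂ, ContDiff ℝ n w ∧ Ω.indicator f ⋆[mul ℝ ℂ] divConj =ᶠ[𝓝 z₀] w ∧
      dz (dz w) z₀ = π * f z₀ := by
  obtain ⟨ε, hε, hεΩ⟩ := nhds_basis_closedBall.mem_iff.1 (hΩ.mem_nhds hz₀)
  obtain ⟨ρ, hρ⟩ := hΩb.subset_ball 0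
  set F := Ω.indicator f
  let φ : ContDiffBump z₀ := ⟨ε / 2, ε, by positivity, by linarith⟩
  set g := fun z => φ z • F z
  have hg : ContDiff ℝ n g := (hf.congr fun z hz => indicator_of_mem hz f)
    |>.contDiff_smul_of_tsupport_subset hΩ φ.contDiff (φ.tsupport_eq ▸ hεΩ)
  have hcg : HasCompactSupport g := φ.hasCompactSupport.smul_right
  have hg_int : Integrable g := hg.continuous.integrable_of_hasCompactSupport hcg
  have hfar : ∀ t, (F - g) t ≠ 0 → 2 * (ε / 4) < dist t z₀ ∧ ‖t‖ < ρ := by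
    intro t ht
    have htΩ : t ∈ Ω := by_contra fun h => ht (by simp [g, F, h])
    refine ⟨lt_of_not_ge fun h => ht ?_, by simpa using hρ htΩ⟩
    simp [g, φ.one_of_mem_closedBall (mem_closedBall.2 (by linarith) : t ∈ closedBall z₀ (ε / 2))]
  obtain ⟨w, hw, hFw, hdzw⟩ :=
    exists_eqOn_convolution_divConj_of_far (hF.sub hg_int) (by positivity) hfar
  have hw : ContDiff ℝ n w := hw.of_le (WithTop.coe_le_coe.2 le_top)
  have hKg : ContDiff ℝ n (divConj ⋆[mul ℝ ℂ] g) :=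
    hcg.contDiff_convolution_right _ locallyIntegrable_divConj hg
  have h2 : (2 : WithTop ℕ∞) ≤ n := WithTop.coe_le_coe.2 hn
  refine ⟨(divConj ⋆[mul ℝ ℂ] g) + w, hKg.add hw, ?_, ?_⟩
  · have hcomm : divConj ⋆[mul ℝ ℂ] g = g ⋆[mul ℝ ℂ] divConj := by
      rw [← convolution_flip, ContinuousLinearMap.flip_mul]
    filter_upwards [ball_mem_nhds z₀ (by positivity : 0 < ε / 4)] with z hz
    rw [Pi.add_apply, ← hFw hz, hcomm,
      ← (hg_int.convolutionExistsAt_divConj z).add_distrib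
        ((hF.sub hg_int).convolutionExistsAt_divConj z), add_sub_cancel]
  · rw [dz_dz_add (hKg.of_le h2) (hw.of_le h2), dz_dz_divConj_convolution (hg.of_le h2) hcg, hdzw,
      add_zero]
    simp [g, F, φ.one_of_mem_closedBall (mem_closedBall_self (by positivity)), hz₀]

end Wirtinger

open Wirtinger in
/-- Let `Ω ⊂ ℂ` be open and bounded, `k ≥ 2`, and let `f` be `C^k`
(in the real sense) on the closure of `Ω`.  Then
`u(z) = (1/π) ∫_Ω f(ζ) ((z-ζ)/conj (z-ζ)) dA(ζ)` is `C^k` on `Ω` and satisfies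
`∂_z² u = f` on `Ω`. -/
theorem stmt_1 (Ω : Set ℂ) (hΩopen : IsOpen Ω) (hΩbdd : Bornology.IsBounded Ω)
    (k : ℕ) (hk : 2 ≤ k) (f : ℂ → ℂ) (hf : ContDiffOn ℝ k f (closure Ω))
    (u : ℂ → ℂ)
    (hu : ∀ z : ℂ, u z = (Real.pi : ℂ)⁻¹ *
      ∫ ζ in Ω, f ζ * ((z - ζ) / (starRingEnd ℂ) (z - ζ))) :
    ContDiffOn ℝ k u Ω ∧ ∀ z ∈ Ω, dz (dz u) z = f z := by
  have hF : Integrable (Ω.indicator f) :=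
    (integrable_indicator_iff hΩopen.measurableSet).2 <|
      (hf.continuousOn.integrableOn_compact hΩbdd.isCompact_closure).mono_set subset_closure
  have hu' : u = fun z => (π : ℂ)⁻¹ * (Ω.indicator f ⋆[mul ℝ ℂ] divConj) z := by
    funext z
    rw [hu, ← integral_indicator hΩopen.measurableSet, convolution_def]
    congr 2
    funext ζ
    by_cases hζ : ζ ∈ Ω <;> simp [hζ, divConj]
  have hloc : ∀ z₀ ∈ Ω, ∃ w : ℂ → ℂ, ContDiff ℝ k w ∧ u =ᶠ[𝓝 z₀] (fun z => (π : ℂ)⁻¹ * w z) ∧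
      dz (dz w) z₀ = π * f z₀ := fun z₀ hz₀ => by
    obtain ⟨w, hw, hFw, hdzw⟩ := exists_local_model_convolution_divConj hΩopen hΩbdd (n := k)
      (by exact_mod_cast hk) (hf.mono subset_closure) hF hz₀
    exact ⟨w, hw, hu' ▸ hFw.fun_comp _, hdzw⟩
  refine ⟨fun z₀ hz₀ => ?_, fun z₀ hz₀ => ?_⟩ <;> obtain ⟨w, hw, huw, hdzw⟩ := hloc z₀ hz₀
  · exact ((contDiff_const.mul hw).contDiffAt.congr_of_eventuallyEq huw).contDiffWithinAt
  · rw [huw.dz_dz_eq, dz_dz_const_mul _ (hw.of_le (by exact_mod_cast hk)), hdzw]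
    field_simp [Real.pi_ne_zero]
end

section
/- Identify ℂ with ℝ². Let Ω ⊆ ℂ be open, let μ : Ω → ℝ be twice continuously differentiable with μ > 0, and let φ : Ω → ℂ be four times continuously differentiable. Set α := μ ∂_z̄(1/μ) and β := (μ/2) ∂_z̄²(1/μ). Then P_μ(φ) = 0 in Ω if and only if ∂_z̄²∂_z²φ + α ∂_z²∂_z̄φ + β ∂_z²φ + conj(α) ∂_z∂_z̄²φ + conj(β) ∂_z̄²φ = 0 in Ω. -/
/-!
Write `A = ∂_z²φ` and `B = ∂_z̄²φ`. In Wirtinger form the trace-free Hessian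
`∇²φ - (Δφ/2) I₂` has entries `A + B` and `i (A - B)`, and applying the first-order identity
`div (f, g) = ∂_z (f + i g) + ∂_z̄ (f - i g)` twice shows that a symmetric trace-free field `M`
has `div div M = 2 (∂_z² (M₀₀ + i M₀₁) + ∂_z̄² (M₀₀ - i M₀₁))`. Hence
`P_μ(φ) = 2 (∂_z² (B/μ) + ∂_z̄² (A/μ))`. Expanding by the Leibniz rule, commuting `∂_z` with
`∂_z̄`, and using `conj (∂_z̄ f) = ∂_z f` for the real function `f = 1/μ`, the expression in the
statement equals `(μ/4) P_μ(φ)`, which vanishes exactly where `P_μ(φ)` does since `μ > 0`.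
-/

open Matrix

/-- Wirtinger derivative `∂_z̄ w = (1/2)(∂w/∂x + i ∂w/∂y)`. -/
noncomputable def dzbar (w : ℂ → ℂ) (z : ℂ) : ℂ :=
  (1 / 2 : ℂ) * (fderiv ℝ w z 1 + Complex.I * fderiv ℝ w z Complex.I)

/-- Partial derivative `∂f/∂x_i` of a `ℂ`-valued function on `ℂ ≅ ℝ²`
(direction `1` for `i = 0`, direction `I` for `i = 1`). -/
noncomputable def pdC (i : Fin 2) (f : ℂ → ℂ) (z : ℂ) : ℂ :=
  fderiv ℝ f z (![1, Complex.I] i)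

/-- Hessian matrix `∇²φ` of a `ℂ`-valued function on `ℂ ≅ ℝ²`. -/
noncomputable def hessC (φ : ℂ → ℂ) (z : ℂ) : Matrix (Fin 2) (Fin 2) ℂ :=
  Matrix.of fun i j => pdC i (pdC j φ) z

/-- Laplacian `Δφ` of a `ℂ`-valued function on `ℂ ≅ ℝ²`. -/
noncomputable def lapC (φ : ℂ → ℂ) (z : ℂ) : ℂ := pdC 0 (pdC 0 φ) z + pdC 1 (pdC 1 φ) z

/-- Row-wise divergence of a `ℂ`-valued matrix field on `ℂ ≅ ℝ²`. -/
noncomputable def divMatC (M : ℂ → Matrix (Fin 2) (Fin 2) ℂ) (z : ℂ) (i : Fin 2) : ℂ :=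
  pdC 0 (fun w => M w i 0) z + pdC 1 (fun w => M w i 1) z

/-- Double divergence of a `ℂ`-valued matrix field on `ℂ ≅ ℝ²`. -/
noncomputable def divdivC (M : ℂ → Matrix (Fin 2) (Fin 2) ℂ) (z : ℂ) : ℂ :=
  pdC 0 (fun w => divMatC M w 0) z + pdC 1 (fun w => divMatC M w 1) z

/-- The plate-like operator `P_μ(φ) = div div((1/(2μ))(∇²φ - (Δφ/2)I₂))` on `ℂ ≅ ℝ²`,
applied to real and imaginary parts of `φ` separately. -/
noncomputable def PmuC (μ : ℂ → ℝ) (φ : ℂ → ℂ) (z : ℂ) : ℂ :=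
  divdivC (fun w => ((2 * μ w : ℝ) : ℂ)⁻¹ •
    (hessC φ w - (lapC φ w / 2) • (1 : Matrix (Fin 2) (Fin 2) ℂ))) z

open Complex

section Smoothness

variable {E F : Type*} [NormedAddCommGroup E] [NormedSpace ℝ E] [NormedAddCommGroup F]
  [NormedSpace ℝ F] {f : E → F} {x : E}

lemma ContDiffOn.differentiableAt_of_isOpen {n : WithTop ℕ∞} {s : Set E}
    (hf : ContDiffOn ℝ n f s) (hs : IsOpen s) (hn : n ≠ 0) (hx : x ∈ s) :
    DifferentiableAt ℝ f x :=
  (hf.differentiableOn hn x hx).differentiableAt (hs.mem_nhds hx)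

lemma ContDiffAt.differentiableAt_fderiv (hf : ContDiffAt ℝ 2 f x) :
    DifferentiableAt ℝ (fderiv ℝ f) x :=
  (hf.fderiv_right (m := 1) le_rfl).differentiableAt one_ne_zero

lemma ContDiffAt.isSymmSndFDerivAt_two (hf : ContDiffAt ℝ 2 f x) : IsSymmSndFDerivAt ℝ f x :=
  hf.isSymmSndFDerivAt (by simp [minSmoothness_of_isRCLikeNormedField])

end Smoothness

/-- The operator `a ∂ₓ + b ∂_y`; the partial derivatives and both Wirtinger derivatives are of
this form. -/
noncomputable def constCoeffOp (a b : ℂ) (f : ℂ → ℂ) (z : ℂ) : ℂ :=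
  a * fderiv ℝ f z 1 + b * fderiv ℝ f z I

section ConstCoeffOp

variable {a b c d : ℂ} {f g u v : ℂ → ℂ} {z : ℂ} {Ω : Set ℂ}

lemma constCoeffOp_eq_of_hasFDerivAt {f' : ℂ →L[ℝ] ℂ} (h : HasFDerivAt f f' z) :
    constCoeffOp a b f z = a * f' 1 + b * f' I := by
  rw [constCoeffOp, h.fderiv]

lemma constCoeffOp_add (hf : DifferentiableAt ℝ f z) (hg : DifferentiableAt ℝ g z) :
    constCoeffOp a b (fun w => f w + g w) z = constCoeffOp a b f z + constCoeffOp a b g z := by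
  rw [constCoeffOp_eq_of_hasFDerivAt (f := fun w => f w + g w) (hf.hasFDerivAt.add hg.hasFDerivAt),
    constCoeffOp, constCoeffOp, _root_.add_apply, _root_.add_apply]
  ring

lemma constCoeffOp_sub (hf : DifferentiableAt ℝ f z) (hg : DifferentiableAt ℝ g z) :
    constCoeffOp a b (fun w => f w - g w) z = constCoeffOp a b f z - constCoeffOp a b g z := by
  rw [constCoeffOp_eq_of_hasFDerivAt (f := fun w => f w - g w) (hf.hasFDerivAt.sub hg.hasFDerivAt),
    constCoeffOp, constCoeffOp, _root_.sub_apply, _root_.sub_apply]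
  ring

lemma constCoeffOp_const_mul (c : ℂ) (hf : DifferentiableAt ℝ f z) :
    constCoeffOp a b (fun w => c * f w) z = c * constCoeffOp a b f z := by
  rw [constCoeffOp_eq_of_hasFDerivAt (hf.hasFDerivAt.const_mul c), constCoeffOp,
    _root_.smul_apply, _root_.smul_apply, smul_eq_mul, smul_eq_mul]
  ring

lemma constCoeffOp_mul (hu : DifferentiableAt ℝ u z) (hv : DifferentiableAt ℝ v z) :
    constCoeffOp a b (fun w => u w * v w) z
      = constCoeffOp a b u z * v z + u z * constCoeffOp a b v z := by
  rw [constCoeffOp_eq_of_hasFDerivAt (f := fun w => u w * v w) (hu.hasFDerivAt.mul hv.hasFDerivAt),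
    constCoeffOp, constCoeffOp]
  simp only [_root_.add_apply, _root_.smul_apply, smul_eq_mul]
  ring

lemma constCoeffOp_constCoeffOp (h : DifferentiableAt ℝ (fderiv ℝ f) z) :
    constCoeffOp a b (constCoeffOp c d f) z =
      a * (c * fderiv ℝ (fderiv ℝ f) z 1 1 + d * fderiv ℝ (fderiv ℝ f) z 1 I)
        + b * (c * fderiv ℝ (fderiv ℝ f) z I 1 + d * fderiv ℝ (fderiv ℝ f) z I I) := by
  have hdir (v : ℂ) :
      HasFDerivAt (fun w => fderiv ℝ f w v) ((fderiv ℝ (fderiv ℝ f) z).flip v) z :=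
    (h.hasFDerivAt.clm_apply (hasFDerivAt_const v z)).congr_fderiv (by ext; simp)
  rw [constCoeffOp_eq_of_hasFDerivAt (f := constCoeffOp c d f)
    (((hdir 1).const_mul c).add ((hdir I).const_mul d))]
  simp

lemma constCoeffOp_comm (hf : ContDiffAt ℝ 2 f z) :
    constCoeffOp a b (constCoeffOp c d f) z = constCoeffOp c d (constCoeffOp a b f) z := by
  rw [constCoeffOp_constCoeffOp hf.differentiableAt_fderiv,
    constCoeffOp_constCoeffOp hf.differentiableAt_fderiv, hf.isSymmSndFDerivAt_two 1 I]
  ring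

lemma Set.EqOn.constCoeffOp (h : Set.EqOn f g Ω) (hΩ : IsOpen Ω) :
    Set.EqOn (constCoeffOp a b f) (constCoeffOp a b g) Ω := fun w hw => by
  rw [_root_.constCoeffOp, _root_.constCoeffOp,
    (h.eventuallyEq_of_mem (hΩ.mem_nhds hw)).fderiv_eq]

lemma ContDiffOn.constCoeffOp {m n : WithTop ℕ∞} (hf : ContDiffOn ℝ n f Ω) (hΩ : IsOpen Ω)
    (hmn : m + 1 ≤ n) : ContDiffOn ℝ m (constCoeffOp a b f) Ω := by
  have hf' := hf.fderiv_of_isOpen hΩ hmn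
  exact (contDiffOn_const.mul (hf'.clm_apply contDiffOn_const)).add
    (contDiffOn_const.mul (hf'.clm_apply contDiffOn_const))

lemma conj_constCoeffOp : (starRingEnd ℂ) (constCoeffOp a b f z) =
    constCoeffOp ((starRingEnd ℂ) a) ((starRingEnd ℂ) b) (fun w => (starRingEnd ℂ) (f w)) z := by
  have hconj : (fun w => (starRingEnd ℂ) (f w)) = conjCLE ∘ f := rfl
  rw [constCoeffOp, constCoeffOp, hconj, conjCLE.comp_fderiv]
  simp

lemma constCoeffOp_constCoeffOp_mul (hΩ : IsOpen Ω) (hu : ContDiffOn ℝ 2 u Ω)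
    (hv : ContDiffOn ℝ 2 v Ω) (hz : z ∈ Ω) :
    constCoeffOp a b (constCoeffOp c d (fun w => u w * v w)) z
      = constCoeffOp a b (constCoeffOp c d u) z * v z
        + constCoeffOp c d u z * constCoeffOp a b v z
        + constCoeffOp a b u z * constCoeffOp c d v z
        + u z * constCoeffOp a b (constCoeffOp c d v) z := by
  have hu' : ContDiffOn ℝ 1 (constCoeffOp c d u) Ω := hu.constCoeffOp hΩ le_rfl
  have hv' : ContDiffOn ℝ 1 (constCoeffOp c d v) Ω := hv.constCoeffOp hΩ le_rfl
  have hdu := hu.differentiableAt_of_isOpen hΩ two_ne_zero hz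
  have hdv := hv.differentiableAt_of_isOpen hΩ two_ne_zero hz
  have hdu' := hu'.differentiableAt_of_isOpen hΩ one_ne_zero hz
  have hdv' := hv'.differentiableAt_of_isOpen hΩ one_ne_zero hz
  have hleib : Set.EqOn (constCoeffOp c d (fun w => u w * v w))
      (fun w => constCoeffOp c d u w * v w + u w * constCoeffOp c d v w) Ω := fun w hw =>
    constCoeffOp_mul (hu.differentiableAt_of_isOpen hΩ two_ne_zero hw)
      (hv.differentiableAt_of_isOpen hΩ two_ne_zero hw)
  rw [hleib.constCoeffOp hΩ hz, constCoeffOp_add (f := fun w => constCoeffOp c d u w * v w)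
    (g := fun w => u w * constCoeffOp c d v w) (hdu'.mul hdv) (hdu.mul hdv'),
    constCoeffOp_mul hdu' hdv, constCoeffOp_mul hdu hdv']
  ring

end ConstCoeffOp

section Wirtinger

variable {f g : ℂ → ℂ} {z : ℂ} {Ω : Set ℂ}

lemma pdC_zero_eq : pdC 0 = constCoeffOp 1 0 := by
  funext f z; simp [pdC, constCoeffOp]

lemma pdC_one_eq : pdC 1 = constCoeffOp 0 1 := by
  funext f z; simp [pdC, constCoeffOp]

lemma dz_eq : dz = constCoeffOp (1 / 2) (-I / 2) := by
  funext f z; simp only [dz, constCoeffOp]; ring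

lemma dzbar_eq : dzbar = constCoeffOp (1 / 2) (I / 2) := by
  funext f z; simp only [dzbar, constCoeffOp]; ring

lemma Set.EqOn.pdC (h : Set.EqOn f g Ω) (hΩ : IsOpen Ω) (i : Fin 2) :
    Set.EqOn (pdC i f) (pdC i g) Ω := fun w hw => by
  rw [_root_.pdC, _root_.pdC, (h.eventuallyEq_of_mem (hΩ.mem_nhds hw)).fderiv_eq]

lemma Set.EqOn.dz (h : Set.EqOn f g Ω) (hΩ : IsOpen Ω) : Set.EqOn (dz f) (dz g) Ω :=
  dz_eq ▸ h.constCoeffOp hΩ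

lemma Set.EqOn.dzbar (h : Set.EqOn f g Ω) (hΩ : IsOpen Ω) : Set.EqOn (dzbar f) (dzbar g) Ω :=
  dzbar_eq ▸ h.constCoeffOp hΩ

lemma ContDiffOn.pdC {m n : WithTop ℕ∞} (hf : ContDiffOn ℝ n f Ω) (hΩ : IsOpen Ω)
    (hmn : m + 1 ≤ n) (i : Fin 2) : ContDiffOn ℝ m (pdC i f) Ω :=
  (hf.fderiv_of_isOpen hΩ hmn).clm_apply contDiffOn_const

lemma ContDiffOn.dz {m n : WithTop ℕ∞} (hf : ContDiffOn ℝ n f Ω) (hΩ : IsOpen Ω)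
    (hmn : m + 1 ≤ n) : ContDiffOn ℝ m (dz f) Ω :=
  dz_eq ▸ hf.constCoeffOp hΩ hmn

lemma ContDiffOn.dzbar {m n : WithTop ℕ∞} (hf : ContDiffOn ℝ n f Ω) (hΩ : IsOpen Ω)
    (hmn : m + 1 ≤ n) : ContDiffOn ℝ m (dzbar f) Ω :=
  dzbar_eq ▸ hf.constCoeffOp hΩ hmn

lemma eqOn_dz_dzbar (hΩ : IsOpen Ω) (hf : ContDiffOn ℝ 2 f Ω) :
    Set.EqOn (dz (dzbar f)) (dzbar (dz f)) Ω := fun w hw => by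
  rw [dz_eq, dzbar_eq]
  exact constCoeffOp_comm (hf.contDiffAt (hΩ.mem_nhds hw))

lemma conj_dzbar : (starRingEnd ℂ) (dzbar f z) = dz (fun w => (starRingEnd ℂ) (f w)) z := by
  rw [dzbar_eq, dz_eq, conj_constCoeffOp]
  simp [map_div₀, conj_I, map_ofNat]

lemma pdC_zero_add_pdC_one (hf : DifferentiableAt ℝ f z) (hg : DifferentiableAt ℝ g z) :
    pdC 0 f z + pdC 1 g z = dz (fun w => f w + I * g w) z + dzbar (fun w => f w - I * g w) z := by
  rw [dz_eq, dzbar_eq, constCoeffOp_add hf (hg.const_mul I), constCoeffOp_sub hf (hg.const_mul I),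
    constCoeffOp_const_mul I hg, constCoeffOp_const_mul I hg]
  simp only [pdC, constCoeffOp, Matrix.cons_val_zero, Matrix.cons_val_one]
  linear_combination (fderiv ℝ g z I) * I_mul_I

end Wirtinger

lemma divdivC_eq_of_symm_of_traceless {M : ℂ → Matrix (Fin 2) (Fin 2) ℂ} {Ω : Set ℂ} {z : ℂ}
    (hΩ : IsOpen Ω) (hM : ∀ i j, ContDiffOn ℝ 2 (fun w => M w i j) Ω)
    (hsymm : Set.EqOn (fun w => M w 1 0) (fun w => M w 0 1) Ω)
    (htr : Set.EqOn (fun w => M w 1 1) (fun w => -M w 0 0) Ω) (hz : z ∈ Ω) :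
    divdivC M z = 2 * (dz (dz (fun w => M w 0 0 + I * M w 0 1)) z
      + dzbar (dzbar (fun w => M w 0 0 - I * M w 0 1)) z) := by
  set U := fun w => M w 0 0 + I * M w 0 1
  set V := fun w => M w 0 0 - I * M w 0 1
  have hdiff (i j : Fin 2) {w : ℂ} (hw : w ∈ Ω) : DifferentiableAt ℝ (fun w => M w i j) w :=
    (hM i j).differentiableAt_of_isOpen hΩ two_ne_zero hw
  have hU : ContDiffOn ℝ 2 U Ω := (hM 0 0).add (contDiffOn_const.mul (hM 0 1))
  have hV : ContDiffOn ℝ 2 V Ω := (hM 0 0).sub (contDiffOn_const.mul (hM 0 1))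
  have hrow0 : Set.EqOn (fun w => divMatC M w 0) (fun w => dz U w + dzbar V w) Ω := fun w hw =>
    pdC_zero_add_pdC_one (hdiff 0 0 hw) (hdiff 0 1 hw)
  have hrow1 : Set.EqOn (fun w => divMatC M w 1) (fun w => -I * dz U w + I * dzbar V w) Ω :=
    fun w hw => by
      have hU' : (fun w => M w 0 1 + I * -M w 0 0) = fun w => -I * U w := by
        funext w; linear_combination (M w 0 1) * I_mul_I
      have hV' : (fun w => M w 0 1 - I * -M w 0 0) = fun w => I * V w := by
        funext w; linear_combination (M w 0 1) * I_mul_I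
      simp only [divMatC]
      rw [hsymm.pdC hΩ 0 hw, htr.pdC hΩ 1 hw,
        pdC_zero_add_pdC_one (g := fun w => -M w 0 0) (hdiff 0 1 hw) (hdiff 0 0 hw).neg, hU', hV',
        dz_eq, dzbar_eq, constCoeffOp_const_mul _ (hU.differentiableAt_of_isOpen hΩ two_ne_zero hw),
        constCoeffOp_const_mul _ (hV.differentiableAt_of_isOpen hΩ two_ne_zero hw)]
  have hdU := (hU.dz hΩ le_rfl).differentiableAt_of_isOpen hΩ one_ne_zero hz
  have hdV := (hV.dzbar hΩ le_rfl).differentiableAt_of_isOpen hΩ one_ne_zero hz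
  have hsum : (fun w => (dz U w + dzbar V w) + I * (-I * dz U w + I * dzbar V w))
      = fun w => 2 * dz U w := by
    funext w; linear_combination (dzbar V w - dz U w) * I_mul_I
  have hdiffr : (fun w => (dz U w + dzbar V w) - I * (-I * dz U w + I * dzbar V w))
      = fun w => 2 * dzbar V w := by
    funext w; linear_combination (dz U w - dzbar V w) * I_mul_I
  rw [divdivC, hrow0.pdC hΩ 0 hz, hrow1.pdC hΩ 1 hz,
    pdC_zero_add_pdC_one (f := fun w => dz U w + dzbar V w)
      (g := fun w => -I * dz U w + I * dzbar V w) (hdU.add hdV)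
      ((hdU.const_mul _).add (hdV.const_mul _)), hsum, hdiffr,
    dz_eq, dzbar_eq, constCoeffOp_const_mul _ (dz_eq ▸ hdU),
    constCoeffOp_const_mul _ (dzbar_eq ▸ hdV)]
  ring

section TracelessHessian

variable {f : ℂ → ℂ} {z : ℂ}

lemma pdC_one_pdC_zero (hf : ContDiffAt ℝ 2 f z) : pdC 1 (pdC 0 f) z = pdC 0 (pdC 1 f) z := by
  rw [pdC_zero_eq, pdC_one_eq]
  exact constCoeffOp_comm hf

lemma hessC_sub_lapC_zero_zero_add (hf : ContDiffAt ℝ 2 f z) :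
    (hessC f z - (lapC f z / 2) • (1 : Matrix (Fin 2) (Fin 2) ℂ)) 0 0
      + I * (hessC f z - (lapC f z / 2) • (1 : Matrix (Fin 2) (Fin 2) ℂ)) 0 1
      = 2 * dzbar (dzbar f) z := by
  simp only [hessC, lapC, Matrix.sub_apply, Matrix.smul_apply, Matrix.of_apply, Matrix.one_apply,
    pdC_zero_eq, pdC_one_eq, dzbar_eq, constCoeffOp_constCoeffOp hf.differentiableAt_fderiv,
    ↓reduceIte, zero_ne_one, one_mul, zero_mul, mul_one, mul_zero, add_zero, zero_add, sub_zero,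
    smul_eq_mul]
  linear_combination (-I / 2) * hf.isSymmSndFDerivAt_two I 1
    - fderiv ℝ (fderiv ℝ f) z I I / 2 * I_mul_I

lemma hessC_sub_lapC_zero_zero_sub (hf : ContDiffAt ℝ 2 f z) :
    (hessC f z - (lapC f z / 2) • (1 : Matrix (Fin 2) (Fin 2) ℂ)) 0 0
      - I * (hessC f z - (lapC f z / 2) • (1 : Matrix (Fin 2) (Fin 2) ℂ)) 0 1
      = 2 * dz (dz f) z := by
  simp only [hessC, lapC, Matrix.sub_apply, Matrix.smul_apply, Matrix.of_apply, Matrix.one_apply,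
    pdC_zero_eq, pdC_one_eq, dz_eq, constCoeffOp_constCoeffOp hf.differentiableAt_fderiv,
    ↓reduceIte, zero_ne_one, one_mul, zero_mul, mul_one, mul_zero, add_zero, zero_add, sub_zero,
    smul_eq_mul]
  linear_combination (I / 2) * hf.isSymmSndFDerivAt_two I 1
    - fderiv ℝ (fderiv ℝ f) z I I / 2 * I_mul_I

end TracelessHessian

lemma PmuC_eq {μ : ℂ → ℝ} {φ : ℂ → ℂ} {Ω : Set ℂ} {z : ℂ} (hΩ : IsOpen Ω)
    (hμ : ContDiffOn ℝ 2 μ Ω) (hμ0 : ∀ w ∈ Ω, μ w ≠ 0) (hφ : ContDiffOn ℝ 4 φ Ω) (hz : z ∈ Ω) :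
    PmuC μ φ z = 2 * (dz (dz (fun w => (μ w : ℂ)⁻¹ * dzbar (dzbar φ) w)) z
      + dzbar (dzbar (fun w => (μ w : ℂ)⁻¹ * dz (dz φ) w)) z) := by
  set M : ℂ → Matrix (Fin 2) (Fin 2) ℂ := fun w =>
    ((2 * μ w : ℝ) : ℂ)⁻¹ • (hessC φ w - (lapC φ w / 2) • (1 : Matrix (Fin 2) (Fin 2) ℂ))
  have hφ2 {w : ℂ} (hw : w ∈ Ω) : ContDiffAt ℝ 2 φ w :=
    (hφ.contDiffAt (hΩ.mem_nhds hw)).of_le (by norm_num)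
  have hc : ContDiffOn ℝ 2 (fun w => ((2 * μ w : ℝ) : ℂ)⁻¹) Ω :=
    (ofRealCLM.contDiff.comp_contDiffOn (contDiffOn_const.mul hμ)).inv
      fun w hw => by simp [hμ0 w hw]
  have hH (i j : Fin 2) : ContDiffOn ℝ 2 (fun w => hessC φ w i j) Ω :=
    (hφ.pdC hΩ (m := 3) (by norm_num) j).pdC hΩ (by norm_num) i
  have hM (i j : Fin 2) : ContDiffOn ℝ 2 (fun w => M w i j) Ω :=
    hc.mul ((hH i j).sub ((((hH 0 0).add (hH 1 1)).div_const 2).mul contDiffOn_const))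
  have hsymm : Set.EqOn (fun w => M w 1 0) (fun w => M w 0 1) Ω := fun w hw => by
    simp [M, hessC, pdC_one_pdC_zero (hφ2 hw)]
  have htr : Set.EqOn (fun w => M w 1 1) (fun w => -M w 0 0) Ω := fun w _ => by
    simp only [M, hessC, lapC, Matrix.smul_apply, Matrix.sub_apply, Matrix.of_apply,
      Matrix.one_apply_eq, smul_eq_mul]
    ring
  have hU : Set.EqOn (fun w => M w 0 0 + I * M w 0 1)
      (fun w => (μ w : ℂ)⁻¹ * dzbar (dzbar φ) w) Ω := fun w hw => by
    simp only [M, Matrix.smul_apply, smul_eq_mul]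
    rw [← mul_left_comm, ← mul_add, hessC_sub_lapC_zero_zero_add (hφ2 hw)]
    push_cast
    ring
  have hV : Set.EqOn (fun w => M w 0 0 - I * M w 0 1)
      (fun w => (μ w : ℂ)⁻¹ * dz (dz φ) w) Ω := fun w hw => by
    simp only [M, Matrix.smul_apply, smul_eq_mul]
    rw [← mul_left_comm, ← mul_sub, hessC_sub_lapC_zero_zero_sub (hφ2 hw)]
    push_cast
    ring
  rw [show PmuC μ φ z = divdivC M z from rfl, divdivC_eq_of_symm_of_traceless hΩ hM hsymm htr hz,
    (hU.dz hΩ).dz hΩ hz, (hV.dzbar hΩ).dzbar hΩ hz]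

lemma wirtinger_form_eq_mul_PmuC {μ : ℂ → ℝ} {φ : ℂ → ℂ} {Ω : Set ℂ} {z : ℂ} (hΩ : IsOpen Ω)
    (hμ : ContDiffOn ℝ 2 μ Ω) (hμ0 : ∀ w ∈ Ω, μ w ≠ 0) (hφ : ContDiffOn ℝ 4 φ Ω) (hz : z ∈ Ω) :
    dzbar (dzbar (dz (dz φ))) z
      + (μ z * dzbar (fun w => (μ w : ℂ)⁻¹) z) * dz (dz (dzbar φ)) z
      + (μ z / 2 * dzbar (dzbar (fun w => (μ w : ℂ)⁻¹)) z) * dz (dz φ) z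
      + (starRingEnd ℂ) (μ z * dzbar (fun w => (μ w : ℂ)⁻¹) z) * dz (dzbar (dzbar φ)) z
      + (starRingEnd ℂ) (μ z / 2 * dzbar (dzbar (fun w => (μ w : ℂ)⁻¹)) z) * dzbar (dzbar φ) z
      = μ z / 4 * PmuC μ φ z := by
  set ρ := fun w => (μ w : ℂ)⁻¹
  have hρ : ContDiffOn ℝ 2 ρ Ω :=
    (ofRealCLM.contDiff.comp_contDiffOn hμ).inv fun w hw => by simp [hμ0 w hw]
  have hφ3 : ContDiffOn ℝ 3 φ Ω := hφ.of_le (by norm_num)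
  have hφ2 : ContDiffOn ℝ 2 φ Ω := hφ.of_le (by norm_num)
  have hconjρ : (fun w => (starRingEnd ℂ) (ρ w)) = ρ := by
    funext w; simp [ρ]
  have hcomm3 : dzbar (dz (dz φ)) z = dz (dz (dzbar φ)) z := calc
    _ = dz (dzbar (dz φ)) z := (eqOn_dz_dzbar hΩ (hφ3.dz hΩ (by norm_num))).symm hz
    _ = dz (dz (dzbar φ)) z := ((eqOn_dz_dzbar hΩ hφ2).symm.dz hΩ) hz
  have hcomm4 : dz (dz (dzbar (dzbar φ))) z = dzbar (dzbar (dz (dz φ))) z := calc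
    _ = dz (dzbar (dz (dzbar φ))) z :=
      (eqOn_dz_dzbar hΩ (hφ3.dzbar hΩ (by norm_num))).dz hΩ hz
    _ = dz (dzbar (dzbar (dz φ))) z := (((eqOn_dz_dzbar hΩ hφ2).dzbar hΩ).dz hΩ) hz
    _ = dzbar (dz (dzbar (dz φ))) z :=
      eqOn_dz_dzbar hΩ ((hφ.dz hΩ (m := 3) (by norm_num)).dzbar hΩ (by norm_num)) hz
    _ = dzbar (dzbar (dz (dz φ))) z :=
      ((eqOn_dz_dzbar hΩ (hφ3.dz hΩ (by norm_num))).dzbar hΩ) hz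
  have hleib_dz : dz (dz (fun w => ρ w * dzbar (dzbar φ) w)) z = dz (dz ρ) z * dzbar (dzbar φ) z
      + 2 * dz ρ z * dz (dzbar (dzbar φ)) z + ρ z * dz (dz (dzbar (dzbar φ))) z := by
    rw [dz_eq, constCoeffOp_constCoeffOp_mul hΩ hρ ((hφ.dzbar hΩ (m := 3) (by norm_num)).dzbar hΩ
      (by norm_num)) hz]
    ring
  have hleib_dzbar : dzbar (dzbar (fun w => ρ w * dz (dz φ) w)) z =
      dzbar (dzbar ρ) z * dz (dz φ) z + 2 * dzbar ρ z * dzbar (dz (dz φ)) z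
        + ρ z * dzbar (dzbar (dz (dz φ))) z := by
    rw [dzbar_eq, constCoeffOp_constCoeffOp_mul hΩ hρ ((hφ.dz hΩ (m := 3) (by norm_num)).dz hΩ
      (by norm_num)) hz]
    ring
  have hμρ : (μ z : ℂ) * ρ z = 1 := mul_inv_cancel₀ (by exact_mod_cast hμ0 z hz)
  rw [PmuC_eq hΩ hμ hμ0 hφ hz, hleib_dz, hleib_dzbar, hcomm3, hcomm4]
  simp only [map_mul, map_div₀, conj_ofReal, map_ofNat, conj_dzbar, hconjρ]
  linear_combination -dzbar (dzbar (dz (dz φ))) z * hμρ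

/-- With `α = μ ∂_z̄(1/μ)` and `β = (μ/2) ∂_z̄²(1/μ)`, `P_μ(φ) = 0` in
`Ω` iff `∂_z̄²∂_z²φ + α ∂_z²∂_z̄φ + β ∂_z²φ + ᾱ ∂_z∂_z̄²φ + β̄ ∂_z̄²φ = 0` in `Ω`. -/
theorem stmt_10 (Ω : Set ℂ) (hΩopen : IsOpen Ω)
    (μ : ℂ → ℝ) (hμ : ContDiffOn ℝ 2 μ Ω) (hμpos : ∀ z ∈ Ω, 0 < μ z)
    (φ : ℂ → ℂ) (hφ : ContDiffOn ℝ 4 φ Ω)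
    (α β : ℂ → ℂ)
    (hα : ∀ z, α z = (μ z : ℂ) * dzbar (fun w => ((μ w : ℂ))⁻¹) z)
    (hβ : ∀ z, β z = ((μ z : ℂ) / 2) * dzbar (dzbar (fun w => ((μ w : ℂ))⁻¹)) z) :
    (∀ z ∈ Ω, PmuC μ φ z = 0) ↔
    (∀ z ∈ Ω,
      dzbar (dzbar (dz (dz φ))) z + α z * dz (dz (dzbar φ)) z + β z * dz (dz φ) z
        + (starRingEnd ℂ) (α z) * dz (dzbar (dzbar φ)) z
        + (starRingEnd ℂ) (β z) * dzbar (dzbar φ) z = 0) := by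
  have hμ0 : ∀ z ∈ Ω, μ z ≠ 0 := fun z hz => (hμpos z hz).ne'
  simp only [hα, hβ]
  refine forall₂_congr fun z hz => ?_
  rw [wirtinger_form_eq_mul_PmuC hΩopen hμ hμ0 hφ hz]
  simp [hμ0 z hz]
end
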